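/- arXiv:0809.2386 — 2 statements merged into one kernel-verified Lean document; each statement's English description precedes it below -/
import Mathlib

section
/- A graph is a partial (l,k)-tree if and only if it has a tree-decomposition of width (l,k), i.e., a tree-decomposition in which every bag has at most k vertices and any two distinct bags intersect in at most l vertices. -/
/-- A relational structure over signature `σ` with arities `ar`, on domain `D`:
an interpretation of each relation symbol. -/
def RelStruct (σ : Type) (ar : σ → ℕ) (D : Type) : Type :=
  ∀ s : σ, (Fin (ar s) → D) → Prop

variable {σ : Type} {ar : σ → ℕ}

/-- `f` is a homomorphism from `A` to `B`. -/
def IsHom {D₁ D₂ : Type} (A : RelStruct σ ar D₁) (B : RelStruct σ ar D₂)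
    (f : D₁ → D₂) : Prop :=
  ∀ s x, A s x → B s (f ∘ x)

/-- `f` is a strong homomorphism from `A` to `B`. -/
def IsStrongHom {D₁ D₂ : Type} (A : RelStruct σ ar D₁) (B : RelStruct σ ar D₂)
    (f : D₁ → D₂) : Prop :=
  ∀ s x, A s x ↔ B s (f ∘ x)

/-- An embedding is an injective strong homomorphism. -/
def IsEmbedding {D₁ D₂ : Type} (A : RelStruct σ ar D₁) (B : RelStruct σ ar D₂)
    (f : D₁ → D₂) : Prop :=
  Function.Injective f ∧ IsStrongHom A B f

/-- Homomorphic equivalence. -/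
def HomEquiv {D₁ D₂ : Type} (A : RelStruct σ ar D₁) (B : RelStruct σ ar D₂) : Prop :=
  (∃ f, IsHom A B f) ∧ (∃ g, IsHom B A g)

/-- Disjoint union of two structures. -/
def dUnion {D₁ D₂ : Type} (A : RelStruct σ ar D₁) (B : RelStruct σ ar D₂) :
    RelStruct σ ar (D₁ ⊕ D₂) :=
  fun s x => (∃ y, x = Sum.inl ∘ y ∧ A s y) ∨ (∃ y, x = Sum.inr ∘ y ∧ B s y)

/-- The Gaifman graph of a structure. -/
def gaifman {D : Type} (A : RelStruct σ ar D) : SimpleGraph D :=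
  SimpleGraph.fromRel (fun u v => ∃ s x, A s x ∧ (∃ i, x i = u) ∧ (∃ j, x j = v))

/-- Substructure induced on a subset of the domain. -/
def induceStruct {D : Type} (A : RelStruct σ ar D) (S : Set D) : RelStruct σ ar S :=
  fun s x => A s (fun i => (x i : D))
/-- The graph obtained from `G` by adding `m` new vertices, each adjacent to all
vertices of `C` and to each other. -/
def glueGraph {V : Type} (G : SimpleGraph V) (C : Finset V) (m : ℕ) :
    SimpleGraph (V ⊕ Fin m) :=
  SimpleGraph.fromRel (fun a b =>
    (∃ u v, a = Sum.inl u ∧ b = Sum.inl v ∧ G.Adj u v) ∨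
    (∃ u j, a = Sum.inl u ∧ b = Sum.inr j ∧ u ∈ C) ∨
    (∃ i j, a = Sum.inr i ∧ b = Sum.inr j))

/-- The class of `(l,k)`-trees: complete graphs on `k` vertices are `(l,k)`-trees,
and one may glue `k - l` new vertices onto an induced `l`-clique so that they form
a `k`-clique together; the class is closed under isomorphism. -/
inductive IsLKTree (l k : ℕ) : {V : Type} → SimpleGraph V → Prop where
  | base {V : Type} [Fintype V] (h : Fintype.card V = k) :
      IsLKTree l k (⊤ : SimpleGraph V)
  | glue {V : Type} (G : SimpleGraph V) (C : Finset V) (hC : C.card = l)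
      (hclique : G.IsClique ↑C) (hG : IsLKTree l k G) :
      IsLKTree l k (glueGraph G C (k - l))
  | iso {V W : Type} (G : SimpleGraph V) (G' : SimpleGraph W)
      (e : G ≃g G') (hG : IsLKTree l k G) : IsLKTree l k G'

/-- A partial `(l,k)`-tree: a (not necessarily induced) subgraph of an `(l,k)`-tree. -/
def IsPartialLKTree (l k : ℕ) {V : Type} (G : SimpleGraph V) : Prop :=
  ∃ (W : Type) (T : SimpleGraph W) (f : V → W),
    IsLKTree l k T ∧ Function.Injective f ∧ ∀ u v, G.Adj u v → T.Adj (f u) (f v)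

/-- A tree-decomposition of a graph `G`, with bags indexed by `ι`. -/
structure TreeDecomp {V : Type} (G : SimpleGraph V) (ι : Type) where
  T : SimpleGraph ι
  isTree : T.IsTree
  bag : ι → Finset V
  mem_bag : ∀ v : V, ∃ i, v ∈ bag i
  edge_cover : ∀ u v, G.Adj u v → ∃ i, u ∈ bag i ∧ v ∈ bag i
  connected : ∀ v : V, (T.induce {i | v ∈ bag i}).Preconnected

/-- A tree-decomposition has width `(l,k)` if every bag has at most `k` vertices
and any two distinct bags intersect in at most `l` vertices. -/
def TreeDecomp.widthLE {V : Type} [DecidableEq V] {G : SimpleGraph V} {ι : Type}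
    (td : TreeDecomp G ι) (l k : ℕ) : Prop :=
  (∀ i, (td.bag i).card ≤ k) ∧ ∀ i j, i ≠ j → (td.bag i ∩ td.bag j).card ≤ l


/-!
An `(l,k)`-tree has a tree-decomposition whose bags are the `k`-cliques created along its
construction: a glued clique becomes a new leaf, hung off a bag that contains the `l`-clique it
was glued onto. Two bags then share at most that `l`-clique, and every clique of the graph lies
in a bag, which is what lets the induction find the bag to hang the next leaf from. Such a
decomposition pulls back to every subgraph.

Conversely, build the `(l,k)`-tree along the decomposition tree, adding one leaf bag `b` with
neighbour `q` at a time. Since the bags containing a vertex form a subtree, `b` meets the bags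
already treated only inside `b ∩ q`, of size at most `l`. Before gluing, the `k`-clique that
realises `q` is replaced, by repeated gluing, by a `k`-clique that still contains the image of
`b ∩ q` but no other vertex already used; the rest of `b` is then mapped to its fresh vertices.
-/

open SimpleGraph Finset

lemma Finset.disjSum_inter_map_inl {α β : Type*} [DecidableEq α] [DecidableEq β]
    (s t : Finset α) (u : Finset β) : s.disjSum u ∩ t.map .inl = (s ∩ t).map .inl := by
  ext (x | y) <;> simp

lemma Set.InjOn.piecewise_union {α β : Type*} {s t : Set α} [∀ x, Decidable (x ∈ s)]
    {f g : α → β} (hf : InjOn f s) (hg : InjOn g t) (hfg : ∀ x ∈ s, ∀ y ∈ t, f x ≠ g y) :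
    InjOn (s.piecewise f g) (s ∪ t) := by
  rintro x hx y hy hxy
  by_cases hxs : x ∈ s <;> by_cases hys : y ∈ s <;>
    simp only [Set.piecewise_eq_of_mem, Set.piecewise_eq_of_notMem, hxs, hys, not_false_eq_true]
      at hxy
  · exact hf hxs hys hxy
  · exact absurd hxy (hfg x hxs y (hy.resolve_left hys))
  · exact absurd hxy.symm (hfg y hys x (hx.resolve_left hxs))
  · exact hg (hx.resolve_left hxs) (hy.resolve_left hys) hxy

lemma Set.InjOn.exists_extend_finset {α β : Type*} [DecidableEq α] [DecidableEq β] [Nonempty β]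
    {f : α → β} {s : Set α} (hf : InjOn f s) {B P : Finset α} {K : Finset β} (hPB : P ⊆ B)
    (hPs : ↑P ⊆ s) (hBs : ∀ x ∈ B, x ∈ s → x ∈ P) (hPK : ∀ x ∈ P, f x ∈ K)
    (hsK : ∀ x ∈ s, f x ∈ K → x ∈ P) (hBK : #B ≤ #K) :
    ∃ g : α → β, InjOn g (s ∪ B) ∧ EqOn g f s ∧ ∀ x ∈ B, g x ∈ K := by
  have hfP : P.image f ⊆ K := fun y hy => by
    obtain ⟨x, hx, rfl⟩ := Finset.mem_image.1 hy
    exact hPK x hx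
  have hroom : (↑(B \ P) : Set α).encard ≤ (↑(K \ P.image f) : Set β).encard := by
    simp only [Set.encard_coe_eq_coe_finsetCard, Nat.cast_le]
    rw [card_sdiff_of_subset hPB, card_sdiff_of_subset hfP, card_image_of_injOn (hf.mono hPs)]
    exact Nat.sub_le_sub_right hBK _
  obtain ⟨e, he, heinj⟩ := (B \ P).finite_toSet.exists_injOn_of_encard_le hroom
  have hfresh : ∀ x ∈ (↑(B \ P) : Set α), x ∉ s := fun x hx hxs =>
    (Finset.mem_sdiff.1 hx).2 (hBs x (Finset.mem_sdiff.1 hx).1 hxs)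
  refine ⟨(↑(B \ P) : Set α).piecewise e f, ?_, fun x hx => ?_, fun x hx => ?_⟩
  · refine (heinj.piecewise_union hf fun x hx y hy hxy => ?_).mono fun x hx => ?_
    · have hex := Finset.mem_sdiff.1 (he hx)
      exact hex.2 (Finset.mem_image.2 ⟨y, hsK y hy (hxy ▸ hex.1), hxy.symm⟩)
    · by_cases hxBP : x ∈ (↑(B \ P) : Set α)
      · exact .inl hxBP
      · exact .inr (hx.elim id fun hxB => hPs (by simpa [hxB] using hxBP))
  · exact Set.piecewise_eq_of_notMem _ _ _ fun h => hfresh x h hx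
  · by_cases hxBP : x ∈ (↑(B \ P) : Set α)
    · rw [Set.piecewise_eq_of_mem _ _ _ hxBP]
      exact (Finset.mem_sdiff.1 (he hxBP)).1
    · rw [Set.piecewise_eq_of_notMem _ _ _ hxBP]
      exact hPK x (by simpa [hx] using hxBP)

namespace SimpleGraph

variable {V W ι : Type*}

lemma IsClique.map_copy {G : SimpleGraph V} {H : SimpleGraph W} (f : Copy G H) {s : Finset V}
    (h : G.IsClique (s : Set V)) : H.IsClique (s.map f.toEmbedding : Set W) := by
  intro x hx y hy hne
  simp only [coe_map, Set.mem_image, mem_coe] at hx hy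
  obtain ⟨a, ha, rfl⟩ := hx
  obtain ⟨b, hb, rfl⟩ := hy
  exact f.toHom.map_adj (h ha hb fun hab => hne (hab ▸ rfl))

lemma IsNClique.map_copy {G : SimpleGraph V} {H : SimpleGraph W} (f : Copy G H) {n : ℕ}
    {s : Finset V} (h : G.IsNClique n s) : H.IsNClique n (s.map f.toEmbedding) :=
  ⟨h.isClique.map_copy f, by rw [card_map, h.card_eq]⟩

lemma Preconnected.induce_image {G : SimpleGraph V} {H : SimpleGraph W} (φ : G →g H) {s : Set V}
    (hs : (G.induce s).Preconnected) : (H.induce (φ '' s)).Preconnected :=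
  hs.map (induceHom φ (Set.mapsTo_image φ s)) fun ⟨_, x, hx, hxy⟩ => ⟨⟨x, hx⟩, Subtype.ext hxy⟩

lemma Preconnected.exists_isPath_of_induce {G : SimpleGraph V} {s : Set V}
    (hs : (G.induce s).Preconnected) {a b : V} (ha : a ∈ s) (hb : b ∈ s) :
    ∃ p : G.Walk a b, p.IsPath ∧ ∀ x ∈ p.support, x ∈ s := by
  classical
  obtain ⟨w⟩ := hs ⟨a, ha⟩ ⟨b, hb⟩
  refine ⟨(w.map (Embedding.induce s).toHom).bypass, Walk.bypass_isPath _, fun x hx => ?_⟩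
  obtain ⟨y, -, rfl⟩ :=
    List.mem_map.1 (Walk.support_map _ w ▸ Walk.support_bypass_subset_support _ hx)
  exact y.2

lemma IsAcyclic.map {G : SimpleGraph V} (f : V ↪ W) (hG : G.IsAcyclic) : (G.map f).IsAcyclic := by
  intro a c hc
  set e := Embedding.map f G
  have hrange : ∀ x ∈ c.support, x ∈ Set.range e := fun x hx => by
    obtain ⟨y, -, hxy⟩ := adj_of_mem_walk_support c hc.not_nil hx
    obtain ⟨u, -, -, rfl, -⟩ := (map_adj f G x y).1 hxy
    exact ⟨u, rfl⟩
  have hc' : (c.induce (Set.range e) hrange).IsCycle := by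
    have hinj : Function.Injective (Embedding.induce (G := G.map f) (Set.range e)).toHom :=
      (Embedding.induce (G := G.map f) _).injective
    rw [← Walk.isCycle_map_iff_of_injective hinj, Walk.map_induce]
    exact hc
  exact hG _ (hc'.map (f := e.isoInduceRange.symm.toHom) e.isoInduceRange.symm.injective)

def addLeaf (T : SimpleGraph ι) (i₀ : ι) : SimpleGraph (Option ι) :=
  T.map some ⊔ edge (some i₀) none

def addLeafHom (T : SimpleGraph ι) (i₀ : ι) : T →g T.addLeaf i₀ :=
  (Hom.ofLE le_sup_left).comp (Embedding.map .some T).toHom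

@[simp] lemma addLeafHom_apply (T : SimpleGraph ι) (i₀ i : ι) : addLeafHom T i₀ i = some i := rfl

lemma addLeaf_adj_none (T : SimpleGraph ι) (i₀ : ι) : (T.addLeaf i₀).Adj (some i₀) none :=
  Or.inr (by simp [edge_adj])

lemma IsTree.addLeaf {T : SimpleGraph ι} (hT : T.IsTree) (i₀ : ι) : (T.addLeaf i₀).IsTree where
  connected := by
    refine (connected_iff_exists_forall_reachable _).2 ⟨some i₀, ?_⟩
    rintro (_ | x)
    · exact (addLeaf_adj_none T i₀).reachable
    · exact (hT.connected i₀ x).map (addLeafHom T i₀)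
  isAcyclic := by
    refine (hT.isAcyclic.map Function.Embedding.some).sup_edge_of_not_reachable fun h => ?_
    obtain ⟨_, h'⟩ :=
      (mem_support _).1 (mem_support_of_reachable (Option.some_ne_none i₀).symm h.symm)
    obtain ⟨-, _, _, -, h'', -⟩ := (map_adj' _ _ _ _).1 h'
    exact Option.some_ne_none _ h''

lemma IsTree.support_subset_of_preconnected {T : SimpleGraph ι} (hT : T.IsTree) {s : Set ι}
    (hs : (T.induce s).Preconnected) {a b : ι} (ha : a ∈ s) (hb : b ∈ s) {p : T.Walk a b}
    (hp : p.IsPath) : ∀ x ∈ p.support, x ∈ s := by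
  obtain ⟨p', hp', hp's⟩ := hs.exists_isPath_of_induce ha hb
  rwa [(hT.existsUnique_path a b).unique hp hp']

/-- In a tree, a neighbour `q ∈ t` of a vertex `b ∉ t` separates `b` from the subtree `t`. -/
lemma IsTree.mem_of_adj_of_preconnected {T : SimpleGraph ι} (hT : T.IsTree) {s t : Set ι}
    (hs : (T.induce s).Preconnected) (ht : (T.induce t).Preconnected) {b q j : ι}
    (hbq : T.Adj b q) (hb : b ∉ t) (hq : q ∈ t) (hj : j ∈ t) (hbs : b ∈ s) (hjs : j ∈ s) :
    q ∈ s := by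
  obtain ⟨p, hp, hpt⟩ := ht.exists_isPath_of_induce hq hj
  have hpath : (p.cons hbq).IsPath := hp.cons fun hbp => hb (hpt b hbp)
  exact hT.support_subset_of_preconnected hs hbs hjs hpath q (by simp)

lemma Connected.exists_finset_superset_induce_connected {G : SimpleGraph V} (hG : G.Connected)
    (A : Finset V) : ∃ S : Finset V, A ⊆ S ∧ (G.induce (S : Set V)).Connected := by
  classical
  obtain ⟨r⟩ := hG.nonempty
  let P : ∀ w, G.Walk r w := fun w => (hG r w).some
  refine ⟨insert r (A.biUnion fun w => (P w).support.toFinset),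
    fun w hw => mem_insert_of_mem (mem_biUnion.2 ⟨w, hw, by simp⟩),
    induce_connected_of_patches r (by simp) fun {v} hv => ?_⟩
  simp only [coe_insert, coe_biUnion, mem_coe, List.coe_toFinset, Set.mem_insert_iff,
    Set.mem_iUnion, Set.mem_ofPred_eq, exists_prop] at hv
  rcases hv with rfl | ⟨w, hw, hvw⟩
  · exact ⟨{v}, by simp, rfl, rfl, .rfl⟩
  · refine ⟨{x | x ∈ (P w).support}, fun x hx => ?_, (P w).start_mem_support, hvw,
      (P w).connected_induce_support.preconnected _ _⟩
    exact mem_coe.2 (mem_insert_of_mem (mem_biUnion.2 ⟨w, hw, List.mem_toFinset.2 hx⟩))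

lemma Connected.exists_adj_induce_erase_connected [DecidableEq ι] {T : SimpleGraph ι} {S : Finset ι}
    (hS : (T.induce (S : Set ι)).Connected) (h : 1 < #S) :
    ∃ b ∈ S, ∃ q ∈ S.erase b, T.Adj b q ∧ (T.induce (S.erase b : Set ι)).Connected := by
  have : Nontrivial S := (one_lt_card_iff_nontrivial.1 h).coe_sort
  obtain ⟨b, hb⟩ := hS.exists_connected_induce_compl_singleton_of_finite_nontrivial
  have himage : (Embedding.induce (G := T) (S : Set ι)).toHom '' {b}ᶜ = ↑(S.erase b) := by
    ext x
    constructor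
    · rintro ⟨y, hy, rfl⟩
      exact mem_erase.2 ⟨fun h => hy (Subtype.ext h), y.2⟩
    · intro hx
      exact ⟨⟨x, (mem_erase.1 hx).2⟩, fun h => (mem_erase.1 hx).1 (congrArg Subtype.val h), rfl⟩
  obtain ⟨⟨q, hqS⟩, hq⟩ := exists_ne b
  obtain ⟨w⟩ := hS.preconnected b ⟨q, hqS⟩
  have hw : ¬w.Nil := Walk.not_nil_of_ne hq.symm
  refine ⟨b, b.2, w.snd, ?_, w.adj_snd hw, ?_⟩
  · exact mem_erase.2 ⟨fun h => (w.adj_snd hw).ne (Subtype.ext h.symm), w.snd.2⟩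
  · have := hb.preconnected.induce_image (Embedding.induce (G := T) (S : Set ι)).toHom
    rw [himage] at this
    exact (connected_iff _).2 ⟨this, ⟨q, mem_erase.2 ⟨fun h => hq (Subtype.ext h), hqS⟩⟩⟩

end SimpleGraph

section Glue

variable {V : Type} {G : SimpleGraph V} {C : Finset V} {m : ℕ}

@[simp] lemma glueGraph_adj_inl_inl {u v : V} :
    (glueGraph G C m).Adj (.inl u) (.inl v) ↔ G.Adj u v := by
  simp only [glueGraph, fromRel_adj, ne_eq, Sum.inl.injEq, reduceCtorEq, false_and, exists_false,
    or_false, exists_and_left, exists_eq_left', G.adj_comm v u, or_self]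
  exact ⟨And.right, fun h => ⟨h.ne, h⟩⟩

@[simp] lemma glueGraph_adj_inl_inr {u : V} {j : Fin m} :
    (glueGraph G C m).Adj (.inl u) (.inr j) ↔ u ∈ C := by
  simp [glueGraph]

@[simp] lemma glueGraph_adj_inr_inr {i j : Fin m} :
    (glueGraph G C m).Adj (.inr i) (.inr j) ↔ i ≠ j := by
  simp [glueGraph]

variable (G C m) in
def glueGraphInl : Copy G (glueGraph G C m) :=
  ⟨⟨Sum.inl, glueGraph_adj_inl_inl.2⟩, Sum.inl_injective⟩

lemma isClique_glueGraph_disjSum (hC : G.IsClique (C : Set V)) :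
    (glueGraph G C m).IsClique ((C.disjSum univ : Finset (V ⊕ Fin m)) : Set (V ⊕ Fin m)) := by
  rintro (u | i) hx (v | j) hy hne <;> simp only [mem_coe, inl_mem_disjSum] at hx hy
  · exact glueGraph_adj_inl_inl.2 (hC hx hy (by simpa using hne))
  · exact glueGraph_adj_inl_inr.2 hx
  · exact (glueGraph_adj_inl_inr.2 hy).symm
  · simpa using hne

end Glue

namespace TreeDecomp

variable {V W ι : Type} {G : SimpleGraph V} {H : SimpleGraph W}

def CoversCliques (td : TreeDecomp G ι) : Prop :=
  ∀ C : Finset V, G.IsClique (C : Set V) → ∃ i, C ⊆ td.bag i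

noncomputable def comap (f : Copy G H) (td : TreeDecomp H ι) : TreeDecomp G ι where
  T := td.T
  isTree := td.isTree
  bag i := (td.bag i).preimage f f.injective.injOn
  mem_bag v := (td.mem_bag (f v)).imp fun _ h => by simpa using h
  edge_cover u v huv :=
    (td.edge_cover _ _ (f.toHom.map_adj huv)).imp fun _ h => by simpa using h
  connected v := by
    convert td.connected (f v) using 4 <;> exact mem_preimage

lemma widthLE_comap [DecidableEq V] [DecidableEq W] (f : Copy G H) {td : TreeDecomp H ι}
    {l k : ℕ} (hw : td.widthLE l k) : (td.comap f).widthLE l k := by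
  refine ⟨fun i => (card_le_card_of_injOn f (fun v hv => ?_) f.injective.injOn).trans (hw.1 i),
    fun i j hij => (card_le_card_of_injOn f (fun v hv => ?_) f.injective.injOn).trans
      (hw.2 i j hij)⟩
  · simpa [comap] using hv
  · simpa [comap] using hv

lemma CoversCliques.comap (f : Copy G H) {td : TreeDecomp H ι} (h : td.CoversCliques) :
    (td.comap f).CoversCliques := fun C hC =>
  (h _ (hC.map_copy f)).imp fun _ hi v hv => by
    simp only [TreeDecomp.comap, mem_preimage]
    exact hi (mem_map_of_mem _ hv)

def singleBag [Fintype V] (G : SimpleGraph V) : TreeDecomp G Unit where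
  T := ⊥
  isTree := .of_subsingleton
  bag _ := Finset.univ
  mem_bag _ := ⟨(), mem_univ _⟩
  edge_cover _ _ _ := ⟨(), mem_univ _, mem_univ _⟩
  connected _ := .of_subsingleton

variable {C : Finset V} {m : ℕ} {i₀ : ι}

def glueBag (td : TreeDecomp G ι) (C : Finset V) (m : ℕ) : Option ι → Finset (V ⊕ Fin m)
  | none => C.disjSum univ
  | some i => (td.bag i).map .inl

@[simp] lemma glueBag_none (td : TreeDecomp G ι) : td.glueBag C m none = C.disjSum univ := rfl

@[simp] lemma glueBag_some (td : TreeDecomp G ι) (i : ι) :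
    td.glueBag C m (some i) = (td.bag i).map .inl := rfl

def glue (td : TreeDecomp G ι) (C : Finset V) (m : ℕ) (hC : C ⊆ td.bag i₀) :
    TreeDecomp (glueGraph G C m) (Option ι) where
  T := td.T.addLeaf i₀
  isTree := td.isTree.addLeaf i₀
  bag := td.glueBag C m
  mem_bag := by
    rintro (u | j)
    · obtain ⟨i, hi⟩ := td.mem_bag u
      exact ⟨some i, by simpa using hi⟩
    · exact ⟨none, by simp⟩
  edge_cover := by
    rintro (u | i) (v | j) h
    · obtain ⟨i, hu, hv⟩ := td.edge_cover u v (by simpa using h)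
      exact ⟨some i, by simpa using hu, by simpa using hv⟩
    · exact ⟨none, by simpa using h, by simp⟩
    · exact ⟨none, by simp, by simpa using h.symm⟩
    · exact ⟨none, by simp, by simp⟩
  connected := by
    rintro (u | j)
    · have himage := (td.connected u).induce_image (addLeafHom td.T i₀)
      by_cases hu : u ∈ C
      · have hset : {o | .inl u ∈ td.glueBag C m o} =
            addLeafHom td.T i₀ '' {i | u ∈ td.bag i} ∪ {none} := by
          ext (_ | i) <;> simp [hu]
        rw [hset]
        exact (connected_induce_union (t := {none}) himage Preconnected.of_subsingleton
          ⟨i₀, hC hu, rfl⟩ rfl (addLeaf_adj_none td.T i₀)).preconnected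
      · have hset : {o | .inl u ∈ td.glueBag C m o} = addLeafHom td.T i₀ '' {i | u ∈ td.bag i} := by
          ext (_ | i) <;> simp [hu]
        rwa [hset]
    · have hset : {o | .inr j ∈ td.glueBag C m o} = {none} := by
        ext (_ | i) <;> simp
      rw [hset]
      exact Preconnected.of_subsingleton

@[simp] lemma glue_bag (td : TreeDecomp G ι) (hC : C ⊆ td.bag i₀) :
    (td.glue C m hC).bag = td.glueBag C m := rfl

lemma widthLE_glue [DecidableEq V] {l k : ℕ} (hlk : l ≤ k) {td : TreeDecomp G ι}
    (hw : td.widthLE l k) (hCl : #C = l) (hC : C ⊆ td.bag i₀) :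
    (td.glue C (k - l) hC).widthLE l k := by
  have hnone : ∀ i, #(C ∩ td.bag i) ≤ l := fun i => hCl ▸ card_le_card inter_subset_left
  refine ⟨?_, ?_⟩
  · rintro (_ | i)
    · simp [card_disjSum, hCl, hlk]
    · simpa using hw.1 i
  · rintro (_ | i) (_ | j) hij
    · exact absurd rfl hij
    · simpa [disjSum_inter_map_inl] using hnone j
    · simpa [disjSum_inter_map_inl, inter_comm] using hnone i
    · simpa [← map_inter] using hw.2 i j (by simpa using hij)

lemma CoversCliques.glue {td : TreeDecomp G ι} (h : td.CoversCliques) (hC : C ⊆ td.bag i₀) :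
    (td.glue C m hC).CoversCliques := by
  intro D hD
  by_cases hr : ∃ j, .inr j ∈ D
  · obtain ⟨j, hj⟩ := hr
    refine ⟨none, fun x hx => ?_⟩
    rcases x with u | i
    · have hne : (.inl u : V ⊕ Fin m) ≠ .inr j := by simp
      simpa using hD hx hj hne
    · simp
  · obtain ⟨i, hi⟩ := h D.toLeft fun u hu v hv huv => by
      simpa using hD (mem_toLeft.1 hu) (mem_toLeft.1 hv) (by simpa using huv)
    refine ⟨some i, fun x hx => ?_⟩
    rcases x with u | j
    · simpa using hi (mem_toLeft.2 hx)
    · exact absurd ⟨j, hx⟩ hr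

end TreeDecomp

theorem IsLKTree.exists_treeDecomp {l k : ℕ} (hlk : l ≤ k) {V : Type} {G : SimpleGraph V}
    (h : IsLKTree l k G) [DecidableEq V] :
    ∃ (ι : Type) (td : TreeDecomp G ι), td.widthLE l k ∧ td.CoversCliques := by
  revert ‹DecidableEq V›
  induction h with
  | base hcard =>
    intro
    exact ⟨Unit, .singleBag _, ⟨fun _ => by simp [TreeDecomp.singleBag, hcard],
      fun i j hij => absurd (Subsingleton.elim i j) hij⟩, fun C _ => ⟨(), subset_univ C⟩⟩
  | glue G C hC hclique _ ih =>
    intro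
    classical
    obtain ⟨ι, td, hw, hcov⟩ := ih
    obtain ⟨i₀, hi₀⟩ := hcov C hclique
    obtain rfl := Subsingleton.elim ‹DecidableEq (_ ⊕ Fin (k - l))› instDecidableEqSum
    exact ⟨Option ι, td.glue C (k - l) hi₀, td.widthLE_glue hlk hw hC hi₀, hcov.glue hi₀⟩
  | iso G G' e _ ih =>
    intro
    classical
    obtain ⟨ι, td, hw, hcov⟩ := ih
    exact ⟨ι, td.comap e.symm.toCopy, td.widthLE_comap _ hw, hcov.comap _⟩

section LKTreeExtension

variable {l k : ℕ}

theorem IsLKTree.exists_copy_isNClique_avoiding (hlk : l < k) {W : Type} {H : SimpleGraph W}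
    (hH : IsLKTree l k H) {K I : Finset W} (hK : H.IsNClique k K) (hIK : I ⊆ K) (hI : #I ≤ l)
    (U : Set W) :
    ∃ (W' : Type) (H' : SimpleGraph W') (f : Copy H H'), IsLKTree l k H' ∧
      ∃ K' : Finset W', H'.IsNClique k K' ∧ (∀ x ∈ I, f x ∈ K') ∧
        ∀ w ∈ U, f w ∈ K' → w ∈ I := by
  classical
  induction hn : #{x ∈ K \ I | x ∈ U} using Nat.strong_induction_on generalizing W with
  | _ n ih =>
  rcases eq_empty_or_nonempty {x ∈ K \ I | x ∈ U} with hbad | ⟨x, hxbad⟩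
  · refine ⟨W, H, Copy.id H, hH, K, hK, fun x hx => hIK hx, fun w hw hwK => ?_⟩
    by_contra hwI
    have : w ∈ ({x ∈ K \ I | x ∈ U} : Finset W) := by simp_all
    simp [hbad] at this
  -- The `k`-clique glued onto an `l`-clique `I ⊆ C ⊆ K \ {x}` has fewer vertices in `U`
  -- outside `I`.
  obtain ⟨⟨hxK, hxI⟩, hxU⟩ : (x ∈ K ∧ x ∉ I) ∧ x ∈ U := by simpa using hxbad
  obtain ⟨C, hIC, hCK, hC⟩ := exists_subsuperset_card_eq (subset_erase.2 ⟨hIK, hxI⟩) hI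
    (by rw [card_erase_of_mem hxK, hK.card_eq]; omega)
  have hCcl : H.IsClique (C : Set W) :=
    hK.isClique.subset (coe_subset.2 (hCK.trans (erase_subset _ _)))
  have hK₁ : (glueGraph H C (k - l)).IsNClique k (C.disjSum univ) :=
    ⟨isClique_glueGraph_disjSum hCcl, by simp [card_disjSum, hC]; omega⟩
  have hI₁ : I.map .inl ⊆ (C.disjSum univ : Finset (W ⊕ Fin (k - l))) :=
    map_inl_subset_iff_subset_toLeft.2 (by simpa using hIC)
  have hlt : #{y ∈ (C.disjSum univ : Finset (W ⊕ Fin (k - l))) \ I.map .inl | y ∈ Sum.inl '' U}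
      < n := by
    refine (card_le_card (t := ({x ∈ K \ I | x ∈ U}.erase x).map .inl) ?_).trans_lt ?_
    · rintro (w | j) hw
      · simp only [mem_filter, mem_sdiff, inl_mem_disjSum, mem_map, Function.Embedding.inl_apply,
          Sum.inl.injEq, exists_eq_right, Set.mem_image] at hw
        have hwx := mem_erase.1 (hCK hw.1.1)
        simpa [hw.1.2, hwx.1, hwx.2] using hw.2
      · simp at hw
    · rw [card_map, card_erase_of_mem hxbad, ← hn]
      exact Nat.sub_lt (card_pos.2 ⟨x, hxbad⟩) one_pos
  -- `by convert rfl`: the two filters differ only in their decidability instances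
  obtain ⟨W', H', f, hH', K', hK', hIK', hU'⟩ :=
    ih _ hlt (hH.glue H C hC hCcl) hK₁ hI₁ (by simpa using hI) (Sum.inl '' U) (by convert rfl)
  refine ⟨W', H', f.comp (glueGraphInl H C (k - l)), hH', K', hK',
    fun y hy => hIK' (.inl y) (mem_map_of_mem _ hy), fun w hw hwK => ?_⟩
  simpa using hU' (.inl w) ⟨w, hw, rfl⟩ hwK

end LKTreeExtension

section BagsEmbedInLKTree

variable {V ι : Type} {l k : ℕ}

def BagsEmbedInLKTree (l k : ℕ) (bag : ι → Finset V) (S : Finset ι) : Prop :=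
  ∃ (W : Type) (H : SimpleGraph W) (g : V → W), IsLKTree l k H ∧
    Set.InjOn g {v | ∃ i ∈ S, v ∈ bag i} ∧
    ∀ i ∈ S, ∃ K : Finset W, H.IsNClique k K ∧ ∀ v ∈ bag i, g v ∈ K

lemma bagsEmbedInLKTree_singleton (hk : 0 < k) {bag : ι → Finset V} {i : ι}
    (hi : #(bag i) ≤ k) : BagsEmbedInLKTree l k bag {i} := by
  have : Nonempty (Fin k) := ⟨⟨0, hk⟩⟩
  obtain ⟨g, -, hg⟩ := (bag i).finite_toSet.exists_injOn_of_encard_le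
    (t := (Set.univ : Set (Fin k))) (by simpa [Set.encard_coe_eq_coe_finsetCard] using hi)
  exact ⟨Fin k, ⊤, g, .base (Fintype.card_fin k), by simpa using hg,
    fun _ _ => ⟨univ, ⟨by simp, card_fin k⟩, by simp⟩⟩

variable [DecidableEq V] {bag : ι → Finset V} {S : Finset ι}

lemma BagsEmbedInLKTree.insert [DecidableEq ι] (hlk : l < k) (h : BagsEmbedInLKTree l k bag S)
    {b q : ι} (hq : q ∈ S) (hb : #(bag b) ≤ k) (hbq : #(bag b ∩ bag q) ≤ l)
    (hsep : ∀ j ∈ S, bag b ∩ bag j ⊆ bag q) : BagsEmbedInLKTree l k bag (insert b S) := by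
  classical
  obtain ⟨W, H, g, hH, hg, hK⟩ := h
  set old : Set V := {v | ∃ i ∈ S, v ∈ bag i}
  have hPold : ↑(bag b ∩ bag q) ⊆ old := fun v hv => ⟨q, hq, (mem_inter.1 hv).2⟩
  obtain ⟨Kq, hKq, hgKq⟩ := hK q hq
  have hPKq : (bag b ∩ bag q).image g ⊆ Kq := by
    simpa [image_subset_iff] using fun v _ hv => hgKq v hv
  obtain ⟨W', H', f, hH', K', hK', hPK', hfresh⟩ :=
    hH.exists_copy_isNClique_avoiding hlk hKq hPKq (card_image_le.trans hbq) (g '' old)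
  obtain ⟨w₀, -⟩ : K'.Nonempty := card_pos.1 (by rw [hK'.card_eq]; omega)
  have : Nonempty W' := ⟨w₀⟩
  obtain ⟨g', hg', hg'old, hg'K'⟩ := (f.injective.comp_injOn hg).exists_extend_finset
    (B := bag b) inter_subset_left hPold
    (fun v hvb ⟨j, hj, hvj⟩ => mem_inter.2 ⟨hvb, hsep j hj (mem_inter.2 ⟨hvb, hvj⟩)⟩)
    (fun v hv => hPK' _ (mem_image_of_mem g hv))
    (fun v hv hvK => by
      obtain ⟨u, hu, hgu⟩ := mem_image.1 (hfresh (g v) ⟨v, hv, rfl⟩ hvK)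
      rwa [← hg (hPold hu) hv hgu])
    (hb.trans hK'.card_eq.ge)
  refine ⟨W', H', g', hH', hg'.mono ?_, fun i hi => ?_⟩
  · rintro v ⟨i, hi, hvi⟩
    rcases mem_insert.1 hi with rfl | hiS
    · exact .inr hvi
    · exact .inl ⟨i, hiS, hvi⟩
  by_cases hib : i = b
  · exact hib ▸ ⟨K', hK', hg'K'⟩
  have hiS := (mem_insert.1 hi).resolve_left hib
  obtain ⟨K, hK, hgK⟩ := hK i hiS
  refine ⟨K.map f.toEmbedding, hK.map_copy f, fun v hv => ?_⟩
  rw [hg'old ⟨i, hiS, hv⟩]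
  exact mem_map_of_mem _ (hgK v hv)

end BagsEmbedInLKTree

lemma BagsEmbedInLKTree.isPartialLKTree {V ι : Type} {l k : ℕ} {G : SimpleGraph V}
    {bag : ι → Finset V} {S : Finset ι} (h : BagsEmbedInLKTree l k bag S)
    (hcov : ∀ v, ∃ i ∈ S, v ∈ bag i)
    (hedge : ∀ u v, G.Adj u v → ∃ i ∈ S, u ∈ bag i ∧ v ∈ bag i) : IsPartialLKTree l k G := by
  obtain ⟨W, H, g, hH, hg, hK⟩ := h
  have hginj : Function.Injective g := fun u v huv => hg (hcov u) (hcov v) huv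
  refine ⟨W, H, g, hH, hginj, fun u v huv => ?_⟩
  obtain ⟨i, hi, hu, hv⟩ := hedge u v huv
  obtain ⟨K, hK, hgK⟩ := hK i hi
  exact hK.isClique (hgK u hu) (hgK v hv) (hginj.ne huv.ne)

namespace TreeDecomp

variable {V ι : Type} [DecidableEq V] {G : SimpleGraph V} {l k : ℕ}

lemma bagsEmbedInLKTree [DecidableEq ι] (hlk : l < k) (td : TreeDecomp G ι)
    (hw : td.widthLE l k) {S : Finset ι} (hS : (td.T.induce (S : Set ι)).Connected) :
    BagsEmbedInLKTree l k td.bag S := by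
  induction S using Finset.strongInduction with
  | H S ih =>
  rcases le_or_gt #S 1 with hS1 | hS1
  · obtain ⟨⟨i₀, hi₀⟩⟩ := hS.nonempty
    obtain ⟨i, rfl⟩ := card_eq_one.1 (le_antisymm hS1 (card_pos.2 ⟨i₀, hi₀⟩))
    exact bagsEmbedInLKTree_singleton (by omega) (hw.1 i)
  obtain ⟨b, hb, q, hq, hbq, hconn⟩ := hS.exists_adj_induce_erase_connected hS1
  rw [← insert_erase hb]
  refine (ih _ (erase_ssubset hb) hconn).insert hlk hq (hw.1 b) (hw.2 b q hbq.ne) ?_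
  intro j hj v hv
  rw [mem_inter] at hv
  exact td.isTree.mem_of_adj_of_preconnected (td.connected v) hconn.preconnected hbq (by simp) hq hj
    hv.1 hv.2

theorem isPartialLKTree [Fintype V] (hlk : l < k) (td : TreeDecomp G ι) (hw : td.widthLE l k) :
    IsPartialLKTree l k G := by
  classical
  have : Nonempty ι := td.isTree.connected.nonempty
  choose vbag hvbag using td.mem_bag
  have : ∀ e : V × V, ∃ i, G.Adj e.1 e.2 → e.1 ∈ td.bag i ∧ e.2 ∈ td.bag i := fun e => by
    by_cases he : G.Adj e.1 e.2
    · exact (td.edge_cover _ _ he).imp fun _ h _ => h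
    · exact ⟨Classical.arbitrary ι, fun h => absurd h he⟩
  choose ebag hebag using this
  obtain ⟨S, hAS, hS⟩ :=
    td.isTree.connected.exists_finset_superset_induce_connected (univ.image vbag ∪ univ.image ebag)
  exact (td.bagsEmbedInLKTree hlk hw hS).isPartialLKTree
    (fun v => ⟨vbag v, hAS (by simp), hvbag v⟩)
    (fun u v huv => ⟨ebag (u, v), hAS (by simp), hebag (u, v) huv⟩)

end TreeDecomp

/-- a (finite) graph is a partial `(l,k)`-tree iff it has a
tree-decomposition of width `(l,k)`: every bag has at most `k` vertices and any two
distinct bags intersect in at most `l` vertices. -/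
theorem partialLKTree_iff_treeDecomp {l k : ℕ} (hlk : l < k) {V : Type}
    [Fintype V] [DecidableEq V] (G : SimpleGraph V) :
    IsPartialLKTree l k G ↔
      ∃ (ι : Type) (td : TreeDecomp G ι), td.widthLE l k := by
  refine ⟨fun ⟨W, T, f, hT, hf, hfadj⟩ => ?_, fun ⟨ι, td, hw⟩ => td.isPartialLKTree hlk hw⟩
  classical
  obtain ⟨ι, td, hw, -⟩ := hT.exists_treeDecomp hlk.le
  exact ⟨ι, td.comap ⟨⟨f, hfadj _ _⟩, hf⟩, td.widthLE_comap _ hw⟩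
end

section
/- For a tree-decomposition T of a graph G rooted at bag t, and a vertex v of G not in t, the bags containing v all lie in exactly one of the subtrees obtained by deleting t; consequently, if h : V(G) → D is a map whose restriction to each part A_i (the union of bags of the i-th subtree) is a homomorphism of the induced substructures and whose restriction to t is a partial homomorphism, then h is a homomorphism of the whole structure. -/
variable {σ : Type} {ar : σ → ℕ}

/-- for a tree-decomposition `T` of the Gaifman graph of `A` rooted at
the bag indexed by `r`, every vertex `v` not in the root bag has all its bags in
exactly one connected component of `T` minus the root; consequently, a map
`h : A → B` whose restriction to each part `A_c` (the union of bags of the `c`-th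
subtree) is a homomorphism of induced substructures and whose restriction to the
root bag is a partial homomorphism, is a homomorphism of the whole structure. -/
theorem treeDecomp_root_parts {DA : Type} (A : RelStruct σ ar DA) {ι : Type}
    (td : TreeDecomp (gaifman A) ι) (r : ι) :
    (∀ v : DA, v ∉ td.bag r →
      ∃! c : (td.T.induce {i | i ≠ r}).ConnectedComponent,
        ∀ (i : ι) (hi : i ≠ r), v ∈ td.bag i →
          (td.T.induce {i | i ≠ r}).connectedComponentMk ⟨i, hi⟩ = c) ∧
    (∀ (DB : Type) (B : RelStruct σ ar DB) (h : DA → DB),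
      (∀ c : (td.T.induce {i | i ≠ r}).ConnectedComponent,
        IsHom (induceStruct A {v | ∃ (i : ι) (hi : i ≠ r),
            (td.T.induce {i | i ≠ r}).connectedComponentMk ⟨i, hi⟩ = c ∧
            v ∈ td.bag i}) B (fun x => h x)) →
      IsHom (induceStruct A (↑(td.bag r) : Set DA)) B (fun x => h x) →
      IsHom A B h) := by
  -- auxiliary: any two bags containing the same vertex v ∉ bag r are in the same component
  have same_comp : ∀ v : DA, v ∉ td.bag r → ∀ (i j : ι) (hi : i ≠ r) (hj : j ≠ r),
      v ∈ td.bag i → v ∈ td.bag j →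
      (td.T.induce {i | i ≠ r}).connectedComponentMk ⟨i, hi⟩ =
      (td.T.induce {i | i ≠ r}).connectedComponentMk ⟨j, hj⟩ := by
    intro v hv i j hi hj hvi hvj
    have hreach := td.connected v ⟨i, hvi⟩ ⟨j, hvj⟩
    let φ : (td.T.induce {i | v ∈ td.bag i}) →g (td.T.induce {i | i ≠ r}) :=
      ⟨fun p => ⟨p.1, fun h => hv (h ▸ p.2)⟩, fun a => a⟩
    exact SimpleGraph.ConnectedComponent.sound (hreach.map φ)
  constructor
  · intro v hv
    obtain ⟨i₀, hi₀⟩ := td.mem_bag v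
    have hi₀r : i₀ ≠ r := fun h => hv (h ▸ hi₀)
    refine ⟨(td.T.induce {i | i ≠ r}).connectedComponentMk ⟨i₀, hi₀r⟩, ?_, ?_⟩
    · intro i hi hvi
      exact same_comp v hv i i₀ hi hi₀r hvi hi₀
    · intro c hc
      exact (hc i₀ hi₀r hi₀).symm
  · intro DB B h hparts hroot s x hx
    by_cases hall : ∀ j, x j ∈ td.bag r
    · exact hroot s (fun j => ⟨x j, hall j⟩) hx
    · push_neg at hall
      obtain ⟨j₀, hj₀⟩ := hall
      obtain ⟨i₀, hi₀⟩ := td.mem_bag (x j₀)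
      have hi₀r : i₀ ≠ r := fun h => hj₀ (h ▸ hi₀)
      set c := (td.T.induce {i | i ≠ r}).connectedComponentMk ⟨i₀, hi₀r⟩ with hc
      have hmem : ∀ j, x j ∈ {v | ∃ (i : ι) (hi : i ≠ r),
          (td.T.induce {i | i ≠ r}).connectedComponentMk ⟨i, hi⟩ = c ∧
          v ∈ td.bag i} := by
        intro j
        by_cases heq : x j = x j₀
        · exact ⟨i₀, hi₀r, rfl, heq ▸ hi₀⟩
        · have hadj : (gaifman A).Adj (x j₀) (x j) := by
            refine ⟨fun he => heq he.symm, Or.inl ?_⟩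
            exact ⟨s, x, hx, ⟨j₀, rfl⟩, ⟨j, rfl⟩⟩
          obtain ⟨i, hxji, hxj⟩ := td.edge_cover _ _ hadj
          have hir : i ≠ r := fun h => hj₀ (h ▸ hxji)
          exact ⟨i, hir, same_comp (x j₀) hj₀ i i₀ hir hi₀r hxji hi₀, hxj⟩
      exact hparts c s (fun j => ⟨x j, hmem j⟩) hx
end
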